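/- arXiv:2403.14316 — 3 statements merged into one kernel-verified Lean document; each statement's English description precedes it below -/
import Mathlib

section
/- Let n be a positive integer and let F be a finite field with q elements, where q is a power of an odd prime and q ≡ 1 (mod n). Let H = {x ∈ GL₂(F) : det(x) is an n-th power in Fˣ}, the unique index-n normal subgroup of GL₂(F) with abelian quotient. Then gcd(n, (q−1)/n) = 1 if and only if there exists x ∈ GL₂(F) with xⁿ = I such that the map sending i ∈ {0,1,…,n−1} to the coset xⁱH is a bijection onto GL₂(F)/H. -/
/-!
Write `m = (q - 1) / n`. As `Fˣ` is cyclic of order `n * m`, the `n`-th powers are exactly the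
kernel of `v ↦ v ^ m`, so the coset of `x` in `GL₂(F) ⧸ H` has the order of `(det x) ^ m`,
while `H` has index `n` because `det` is onto. Hence the powers of `x` represent all cosets iff
`(det x) ^ m` has order `n`. If `x ^ n = 1`, then `(det x) ^ m` is killed by `n / gcd(n, m)`,
forcing `gcd(n, m) = 1`; conversely, if `gcd(n, m) = 1` and `u` has order `n`, then `u ^ m` has
order `n` too, and `x = diag(u, 1)` works.
-/

open Function

theorem bijective_pow_fin_iff_orderOf_eq {Q : Type*} [Group Q] [Finite Q] {n : ℕ}
    (hQ : Nat.card Q = n) (y : Q) :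
    Bijective (fun i : Fin n => y ^ (i : ℕ)) ↔ orderOf y = n := by
  refine ⟨fun hbij => le_antisymm (hQ ▸ orderOf_le_card) ?_, fun hy => ?_⟩
  · by_contra! hlt
    have h := hbij.injective (a₁ := ⟨orderOf y, hlt⟩) (a₂ := ⟨0, by omega⟩)
      (by simp [pow_orderOf_eq_one])
    exact (orderOf_pos y).ne' (Fin.mk.inj h)
  · refine Injective.bijective_of_nat_card_le (fun i j hij => Fin.ext ?_) (by simp [hQ])
    exact pow_injOn_Iio_orderOf (by simp [hy]) (by simp [hy]) hij

theorem QuotientGroup.orderOf_mk_comap {G C : Type*} [Group G] [Group C] (φ : G →* C)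
    (K : Subgroup C) [K.Normal] (x : G) :
    orderOf (x : G ⧸ K.comap φ) = orderOf (φ x : C ⧸ K) := by
  refine orderOf_eq_orderOf_iff.mpr fun k => ?_
  rw [← mk_pow, ← mk_pow, eq_one_iff, eq_one_iff, Subgroup.mem_comap, map_pow]

namespace IsCyclic

variable {C : Type*} [CommGroup C] [IsCyclic C] [Finite C] {n m : ℕ}

theorem powMonoidHom_range_eq_ker (h : Nat.card C = n * m) :
    (powMonoidHom n : C →* C).range = (powMonoidHom m).ker := by
  obtain ⟨hn, -⟩ := Nat.mul_ne_zero_iff.mp (h ▸ Nat.card_pos.ne')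
  refine Subgroup.eq_of_le_of_card_ge ?_ ?_
  · rintro _ ⟨w, rfl⟩
    rw [MonoidHom.mem_ker, powMonoidHom_apply, powMonoidHom_apply, ← pow_mul, ← h,
      pow_card_eq_one']
  · rw [card_powMonoidHom_range, card_powMonoidHom_ker, h, Nat.gcd_mul_left_left,
      Nat.gcd_mul_right_left, Nat.mul_div_cancel_left _ (Nat.pos_of_ne_zero hn)]

theorem orderOf_mk_powMonoidHom_range (h : Nat.card C = n * m) (v : C) :
    orderOf (v : C ⧸ (powMonoidHom n : C →* C).range) = orderOf (v ^ m) := by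
  refine orderOf_eq_orderOf_iff.mpr fun k => ?_
  rw [← QuotientGroup.mk_pow, QuotientGroup.eq_one_iff, powMonoidHom_range_eq_ker h,
    MonoidHom.mem_ker, powMonoidHom_apply, ← pow_mul, ← pow_mul, mul_comm]

theorem exists_pow_eq_one_orderOf_pow_eq_iff_coprime (h : Nat.card C = n * m) :
    (∃ u : C, u ^ n = 1 ∧ orderOf (u ^ m) = n) ↔ n.Coprime m := by
  obtain ⟨hn, hm⟩ := Nat.mul_ne_zero_iff.mp (h ▸ Nat.card_pos.ne')
  constructor
  · rintro ⟨u, hun, hu⟩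
    have hdvd : orderOf (u ^ m) ∣ n / n.gcd m := by
      refine orderOf_dvd_of_pow_eq_one ?_
      rw [← pow_mul, ← Nat.mul_div_assoc _ (Nat.gcd_dvd_left n m), mul_comm,
        Nat.mul_div_assoc _ (Nat.gcd_dvd_right n m), pow_mul, hun, one_pow]
    rw [hu] at hdvd
    have hle := Nat.le_of_dvd (Nat.div_pos (Nat.gcd_le_left m (Nat.pos_of_ne_zero hn))
        (Nat.gcd_pos_of_pos_left m (Nat.pos_of_ne_zero hn))) hdvd
    exact (Nat.div_eq_self.mp (le_antisymm (Nat.div_le_self n _) hle)).resolve_left hn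
  · intro hcop
    obtain ⟨g, hg⟩ := exists_ofOrder_eq_natCard (α := C)
    have hgm : orderOf (g ^ m) = n := by
      rw [orderOf_pow' g hm, hg, h, Nat.gcd_mul_left_left,
        Nat.mul_div_cancel _ (Nat.pos_of_ne_zero hm)]
    refine ⟨g ^ m, hgm ▸ pow_orderOf_eq_one _, ?_⟩
    rw [Nat.Coprime.orderOf_pow (hgm ▸ hcop), hgm]

end IsCyclic

namespace Matrix.GeneralLinearGroup

variable {ι R : Type*} [Fintype ι] [DecidableEq ι] [CommRing R]

def diagonalMulSingle (i : ι) : Rˣ →* GL ι R :=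
  Units.map ((diagonalRingHom ι R : (ι → R) →* Matrix ι ι R).comp
    (MonoidHom.mulSingle (fun _ => R) i))

theorem det_diagonalMulSingle (i : ι) (u : Rˣ) : det (diagonalMulSingle i u) = u := by
  ext
  simp [diagonalMulSingle, det_diagonal]

end Matrix.GeneralLinearGroup

theorem stmt_8_general {F : Type*} [Field F] [Fintype F] (q n : ℕ) (hq : Fintype.card F = q)
    (hmod : q ≡ 1 [MOD n])
    (H : Subgroup (GL (Fin 2) F))
    (hH : H = Subgroup.comap (Matrix.GeneralLinearGroup.det : GL (Fin 2) F →* Fˣ)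
      (powMonoidHom n : Fˣ →* Fˣ).range) :
    Nat.gcd n ((q - 1) / n) = 1 ↔
      ∃ x : GL (Fin 2) F, x ^ n = 1 ∧ Function.Bijective
        (fun i : Fin n => (QuotientGroup.mk (x ^ (i : ℕ)) : GL (Fin 2) F ⧸ H)) := by
  subst hH
  set m := (q - 1) / n
  have hcard : Nat.card Fˣ = n * m := by
    rw [Nat.card_units, Nat.card_eq_fintype_card, hq,
      Nat.mul_div_cancel' ((Nat.modEq_iff_dvd' (hq ▸ Fintype.card_pos)).mp hmod.symm)]
  have hindex : Nat.card (GL (Fin 2) F ⧸ (powMonoidHom n : Fˣ →* Fˣ).range.comap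
      Matrix.GeneralLinearGroup.det) = n := by
    rw [← Subgroup.index,
      Subgroup.index_comap_of_surjective _ Matrix.GeneralLinearGroup.det_surjective,
      IsCyclic.index_powMonoidHom_range, hcard, Nat.gcd_mul_right_left]
  simp_rw [QuotientGroup.mk_pow, bijective_pow_fin_iff_orderOf_eq hindex,
    QuotientGroup.orderOf_mk_comap, IsCyclic.orderOf_mk_powMonoidHom_range hcard]
  rw [← Nat.coprime_iff_gcd_eq_one,
    ← IsCyclic.exists_pow_eq_one_orderOf_pow_eq_iff_coprime hcard]
  constructor
  · rintro ⟨u, hu, hord⟩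
    refine ⟨Matrix.GeneralLinearGroup.diagonalMulSingle 0 u,
      by rw [← map_pow, hu, map_one], ?_⟩
    rwa [Matrix.GeneralLinearGroup.det_diagonalMulSingle]
  · rintro ⟨x, hx, hord⟩
    exact ⟨Matrix.GeneralLinearGroup.det x, by rw [← map_pow, hx, map_one], hord⟩

/-- Let `n` be a positive integer and `F` a finite field with `q` elements, `q` an odd
prime power with `q ≡ 1 (mod n)`.  Let `H = {x ∈ GL₂(F) : det x is an n-th power in Fˣ}`.
Then `gcd (n, (q-1)/n) = 1` if and only if there exists `x ∈ GL₂(F)` with `x ^ n = 1`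
such that `{1, x, …, x^(n-1)}` is a set of representatives for the `H`-cosets. -/
theorem stmt_8 {F : Type*} [Field F] [Fintype F] (q n : ℕ) (hq : Fintype.card F = q)
    (hodd : ∃ p r : ℕ, p.Prime ∧ Odd p ∧ 0 < r ∧ q = p ^ r)
    (hn : 0 < n) (hmod : q ≡ 1 [MOD n])
    (H : Subgroup (GL (Fin 2) F))
    (hH : H = Subgroup.comap (Matrix.GeneralLinearGroup.det : GL (Fin 2) F →* Fˣ)
      (powMonoidHom n : Fˣ →* Fˣ).range) :
    Nat.gcd n ((q - 1) / n) = 1 ↔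
      ∃ x : GL (Fin 2) F, x ^ n = 1 ∧ Function.Bijective
        (fun i : Fin n => (QuotientGroup.mk (x ^ (i : ℕ)) : GL (Fin 2) F ⧸ H)) :=
  stmt_8_general q n hq hmod H hH
end

section
/- For all positive integers n and r with gcd(r, n) = 1, the set of prime numbers p satisfying both pʳ ≡ 1 (mod n) and gcd(n, (pʳ − 1)/n) = 1 is infinite. -/
/-!
By Dirichlet's theorem there are infinitely many primes `p ≡ 1 + n (mod n²)`. For each of
them `p ^ r ≡ (1 + n) ^ r ≡ 1 + r n (mod n²)`, so `n ∣ p ^ r - 1` and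
`(p ^ r - 1) / n ≡ r (mod n)`, which is coprime to `n`.
-/

namespace Nat

theorem one_add_pow_modEq_one_add_mul (n r : ℕ) : (1 + n) ^ r ≡ 1 + r * n [MOD n * n] := by
  induction r with
  | zero => simp [Nat.ModEq.refl]
  | succ r ih =>
    calc (1 + n) ^ (r + 1) = (1 + n) ^ r * (1 + n) := pow_succ _ _
      _ ≡ (1 + r * n) * (1 + n) [MOD n * n] := ih.mul_right _
      _ = 1 + (r + 1) * n + r * (n * n) := by ring
      _ ≡ 1 + (r + 1) * n + 0 [MOD n * n] :=
        Nat.ModEq.add_left _ (Nat.modEq_zero_iff_dvd.mpr (dvd_mul_left _ r))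

theorem pow_sub_one_modEq_mul_of_modEq_one_add {p n : ℕ} (r : ℕ) (hp : 0 < p)
    (h : p ≡ 1 + n [MOD n * n]) : p ^ r - 1 ≡ r * n [MOD n * n] := by
  have hpow : p ^ r ≡ 1 + r * n [MOD n * n] :=
    (h.pow r).trans (one_add_pow_modEq_one_add_mul n r)
  refine Nat.ModEq.add_right_cancel' 1 ?_
  rwa [Nat.sub_add_cancel (Nat.one_le_pow _ _ hp), add_comm (r * n)]

theorem div_modEq_of_modEq_mul_self {a b n : ℕ} (hn : 0 < n) (h : a ≡ b * n [MOD n * n]) :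
    a / n ≡ b [MOD n] := by
  unfold Nat.ModEq at h ⊢
  rw [← Nat.mod_mul_right_div_self, h, Nat.mod_mul_right_div_self, Nat.mul_div_cancel _ hn]

end Nat

theorem stmt_9_general (n r : ℕ) (hn : 0 < n) (hgcd : Nat.gcd r n = 1) :
    {p : ℕ | p.Prime ∧ p ^ r ≡ 1 [MOD n] ∧
      Nat.gcd n ((p ^ r - 1) / n) = 1}.Infinite := by
  have hcop : (1 + n).Coprime n := Nat.coprime_add_self_left.mpr (Nat.coprime_one_left n)
  refine (Nat.infinite_setOfPred_prime_and_modEq (mul_ne_zero hn.ne' hn.ne')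
    (hcop.mul_right hcop)).mono ?_
  rintro p ⟨hp, hpn⟩
  have hsq : p ^ r - 1 ≡ r * n [MOD n * n] :=
    Nat.pow_sub_one_modEq_mul_of_modEq_one_add r hp.pos hpn
  have hdvd : n ∣ p ^ r - 1 :=
    Nat.modEq_zero_iff_dvd.mp <| (hsq.of_mul_right n).trans <|
      Nat.modEq_zero_iff_dvd.mpr (dvd_mul_left n r)
  refine ⟨hp, ((Nat.modEq_iff_dvd' (Nat.one_le_pow _ _ hp.pos)).mpr hdvd).symm, ?_⟩
  rw [Nat.gcd_comm, (Nat.div_modEq_of_modEq_mul_self hn hsq).gcd_eq, hgcd]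

/-- For all positive integers `n` and `r` with `gcd (r, n) = 1`, there are infinitely many
primes `p` with `p ^ r ≡ 1 (mod n)` and `gcd (n, (p ^ r - 1) / n) = 1`. -/
theorem stmt_9 (n r : ℕ) (hn : 0 < n) (hr : 0 < r) (hgcd : Nat.gcd r n = 1) :
    {p : ℕ | p.Prime ∧ p ^ r ≡ 1 [MOD n] ∧
      Nat.gcd n ((p ^ r - 1) / n) = 1}.Infinite :=
  stmt_9_general n r hn hgcd
end

section
/- Let p ≥ 5 be a prime and let φ : ℤ/2ℤ → Aut(PSL₂(𝔽_p)) be any group homomorphism such that PGL₂(𝔽_p) is isomorphic to the semidirect product PSL₂(𝔽_p) ⋊_φ ℤ/2ℤ. Then the automorphism φ(1̄) of PSL₂(𝔽_p) (the image under φ of the nontrivial element of ℤ/2ℤ) is not an inner automorphism of PSL₂(𝔽_p); in particular φ is nontrivial, so the semidirect product is not a direct product. -/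
/-!
If `φ(1̄)` were conjugation by `g`, then `(g⁻¹, 1̄)` would be a nontrivial central element of
`PSL₂(𝔽_p) ⋊_φ ℤ/2ℤ ≅ PGL₂(𝔽_p)`. But `PGL_n(R)` is centreless over any reduced ring `R`: if `A` is
central modulo scalars, it conjugates each transvection `T` to some `u • T`, and `u • T - 1`,
being conjugate to the square-zero matrix `T - 1`, forces `(u - 1)² = 0`. Hence `A` commutes with
all transvections and is itself scalar.
-/

open scoped MatrixGroups

namespace Matrix

variable {n R : Type*} [Fintype n] [DecidableEq n] [CommRing R]

theorem isNilpotent_sub_one_of_conj_transvection {i j : n} (hij : i ≠ j) (c : R) (A : GL n R)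
    {u : R} (h : A * transvection i j c * (A⁻¹ : GL n R) = u • transvection i j c) :
    IsNilpotent (u - 1) := by
  set S := u • transvection i j c - 1 with hSdef
  have hS : S = A * single i j c * (A⁻¹ : GL n R) := by
    rw [hSdef, ← h, transvection, Matrix.mul_add, Matrix.add_mul, Matrix.mul_one, Units.mul_inv,
      add_sub_cancel_left]
  have hSS : S * S = 0 := by
    calc S * S = A * (single i j c * single i j c) * (A⁻¹ : GL n R) := by
          simp only [hS, Matrix.mul_assoc, Units.inv_mul_cancel_left]
      _ = 0 := by rw [single_mul_single_of_ne _ _ _ _ hij.symm, Matrix.mul_zero, Matrix.zero_mul]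
  have hcol : ∀ k, S k i = if k = i then u - 1 else 0 := by
    intro k
    by_cases hk : k = i <;> simp [S, transvection, hk, hij.symm]
  refine ⟨2, ?_⟩
  have hii := congr_fun (congr_fun hSS i) i
  rw [mul_apply, Finset.sum_eq_single i (fun k _ hk => by simp [hcol, hk])
    (by simp), hcol, if_pos rfl] at hii
  simpa [sq, hcol] using hii

namespace ProjGenLinGroup

theorem commute_transvectionStruct_of_mk_mem_center [IsReduced R] {A : GL n R}
    (hA : mk A ∈ Subgroup.center PGL(n, R)) (t : TransvectionStruct n R) :
    Commute t.toMatrix (A : Matrix n n R) := by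
  let T : GL n R := ⟨t.toMatrix, t.inv.toMatrix, t.mul_inv, t.inv_mul⟩
  obtain ⟨u, hu⟩ : ∃ u : Rˣ, A * T * GeneralLinearGroup.scalar n u = T * A := by
    rw [← mk_eq_mk_iff, map_mul, map_mul]
    exact (Subgroup.mem_center_iff.mp hA (mk T)).symm
  have hmat : (u : R) • ((A : Matrix n n R) * t.toMatrix) = t.toMatrix * A := by
    simpa [Units.ext_iff, T, smul_eq_mul_diagonal] using hu
  have hconj : ((A⁻¹ : GL n R) : Matrix n n R) * t.toMatrix * ((A⁻¹⁻¹ : GL n R) : Matrix n n R) =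
      (u : R) • t.toMatrix := by
    rw [inv_inv, Matrix.mul_assoc, ← hmat, Matrix.mul_smul, ← Matrix.mul_assoc, Units.inv_mul,
      Matrix.one_mul]
  have hu1 : (u : R) = 1 := sub_eq_zero.mp <| IsReduced.eq_zero _ <|
    isNilpotent_sub_one_of_conj_transvection t.hij t.c A⁻¹ hconj
  rw [hu1, one_smul] at hmat
  exact hmat.symm

theorem center_eq_bot [IsReduced R] : Subgroup.center PGL(n, R) = ⊥ := by
  refine eq_bot_iff.mpr fun x hx => ?_
  induction x using induction_on with | mk A =>
  rw [Subgroup.mem_bot, mk_eq_one, GeneralLinearGroup.mem_center_iff_val_mem_range_scalar]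
  exact mem_range_scalar_of_commute_transvectionStruct
    (commute_transvectionStruct_of_mk_mem_center hx)

end ProjGenLinGroup

end Matrix

theorem ZMod.zpowers_ofAdd_one_eq_top (n : ℕ) :
    Subgroup.zpowers (Multiplicative.ofAdd (1 : ZMod n)) = ⊤ := by
  refine eq_top_iff.mpr fun h _ => ⟨(h.toAdd.cast : ℤ), ?_⟩
  simp [← ofAdd_zsmul]

namespace SemidirectProduct

variable {N G : Type*} [Group N] [Group G] {φ : G →* MulAut N}

theorem mk_inv_mem_center_of_eq_conj {g : G} (hg : Subgroup.zpowers g = ⊤) {n : N}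
    (hφ : φ g = MulAut.conj n) : (⟨n⁻¹, g⟩ : N ⋊[φ] G) ∈ Subgroup.center (N ⋊[φ] G) := by
  refine Subgroup.mem_center_iff.mpr fun x => ?_
  obtain ⟨k, hk⟩ := Subgroup.mem_zpowers_iff.mp (hg ▸ Subgroup.mem_top x.right)
  have hfix : φ x.right n = n := by
    rw [← hk, map_zpow, hφ, ← map_zpow, MulAut.conj_apply]
    group
  ext
  · simp [hfix, hφ, mul_assoc]
  · simp [← hk, (Commute.refl g).zpow_left k |>.eq]

end SemidirectProduct

theorem stmt_14_general (p : ℕ) (hp : p.Prime)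
    (φ : Multiplicative (ZMod 2) →*
      MulAut (Matrix.SpecialLinearGroup (Fin 2) (ZMod p) ⧸
        Subgroup.center (Matrix.SpecialLinearGroup (Fin 2) (ZMod p))))
    (hφ : Nonempty ((GL (Fin 2) (ZMod p) ⧸ Subgroup.center (GL (Fin 2) (ZMod p))) ≃*
      ((Matrix.SpecialLinearGroup (Fin 2) (ZMod p) ⧸
          Subgroup.center (Matrix.SpecialLinearGroup (Fin 2) (ZMod p))) ⋊[φ]
        Multiplicative (ZMod 2)))) :
    (¬ ∃ g : Matrix.SpecialLinearGroup (Fin 2) (ZMod p) ⧸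
        Subgroup.center (Matrix.SpecialLinearGroup (Fin 2) (ZMod p)),
      φ (Multiplicative.ofAdd (1 : ZMod 2)) = MulAut.conj g) ∧
    φ ≠ 1 := by
  have : Fact p.Prime := ⟨hp⟩
  obtain ⟨e⟩ := hφ
  have not_inner : ¬ ∃ g, φ (Multiplicative.ofAdd (1 : ZMod 2)) = MulAut.conj g := by
    rintro ⟨g, hg⟩
    have hcenter := MulEquivClass.apply_mem_center e.symm
      (SemidirectProduct.mk_inv_mem_center_of_eq_conj (ZMod.zpowers_ofAdd_one_eq_top 2) hg)
    have hone : e.symm ⟨g⁻¹, Multiplicative.ofAdd 1⟩ = 1 := Subgroup.mem_bot.mp <|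
      Matrix.ProjGenLinGroup.center_eq_bot (n := Fin 2) (R := ZMod p) ▸ hcenter
    simpa using congrArg SemidirectProduct.right (e.symm_apply_eq.mp hone)
  exact ⟨not_inner, fun hφ1 => not_inner ⟨1, by simp [hφ1]⟩⟩

/-- For a prime `p ≥ 5`, if `φ : ℤ/2ℤ → Aut(PSL₂(𝔽_p))` is any homomorphism such that
`PGL₂(𝔽_p) ≅ PSL₂(𝔽_p) ⋊_φ ℤ/2ℤ`, then the automorphism `φ(1̄)` of `PSL₂(𝔽_p)` is not
inner; in particular `φ` is nontrivial. -/
theorem stmt_14 (p : ℕ) (hp : p.Prime) (hp5 : 5 ≤ p)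
    (φ : Multiplicative (ZMod 2) →*
      MulAut (Matrix.SpecialLinearGroup (Fin 2) (ZMod p) ⧸
        Subgroup.center (Matrix.SpecialLinearGroup (Fin 2) (ZMod p))))
    (hφ : Nonempty ((GL (Fin 2) (ZMod p) ⧸ Subgroup.center (GL (Fin 2) (ZMod p))) ≃*
      ((Matrix.SpecialLinearGroup (Fin 2) (ZMod p) ⧸
          Subgroup.center (Matrix.SpecialLinearGroup (Fin 2) (ZMod p))) ⋊[φ]
        Multiplicative (ZMod 2)))) :
    (¬ ∃ g : Matrix.SpecialLinearGroup (Fin 2) (ZMod p) ⧸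
        Subgroup.center (Matrix.SpecialLinearGroup (Fin 2) (ZMod p)),
      φ (Multiplicative.ofAdd (1 : ZMod 2)) = MulAut.conj g) ∧
    φ ≠ 1 :=
  stmt_14_general p hp φ hφ
end
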